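/- For every q ∈ ℂ with 0 < |q| < 1, the element W₀ := φ(q)·(xyxy + xwxw + zyzy + zwzw + yxyx + wxwx + yzyz + wzwz) + ψ(q)·(xyzw + wzyx) is central in the algebra A₀, i.e. W₀·r = r·W₀ for every r ∈ A₀. (W₀ is the worldsheet superpotential of the generalized mirror of the elliptic orbifold ℙ¹_{2,2,2,2} with Kähler parameter q_orb = q⁴.) -/

import Mathlib

open Complex

/-- Generators `e₁ = g 0`, `e₂ = g 1`, `x = g 2`, `y = g 3`, `z = g 4`, `w = g 5`
of the free noncommutative unital `ℂ`-algebra on six generators. -/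
noncomputable def g (i : Fin 6) : FreeAlgebra ℂ (Fin 6) := FreeAlgebra.ι ℂ i

/-- The defining relations of the quiver algebra `A₀` (the noncommutative crepant
resolution of the conifold): `e₁ + e₂ = 1`, `e₁e₂ = e₂e₁ = 0`, `e₁² = e₁`,
`e₂² = e₂`, `x = e₁xe₂`, `z = e₁ze₂`, `y = e₂ye₁`, `w = e₂we₁`, together with the
cyclic-derivative relations `xyz = zyx`, `yzw = wzy`, `zwx = xwz`, `wxy = yxw` of
the potential `Φ₀ = xyzw − wzyx`. -/
inductive ConifoldRel : FreeAlgebra ℂ (Fin 6) → FreeAlgebra ℂ (Fin 6) → Prop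
  | unit : ConifoldRel (g 0 + g 1) 1
  | orth₁ : ConifoldRel (g 0 * g 1) 0
  | orth₂ : ConifoldRel (g 1 * g 0) 0
  | idem₁ : ConifoldRel (g 0 * g 0) (g 0)
  | idem₂ : ConifoldRel (g 1 * g 1) (g 1)
  | path_x : ConifoldRel (g 2) (g 0 * g 2 * g 1)
  | path_z : ConifoldRel (g 4) (g 0 * g 4 * g 1)
  | path_y : ConifoldRel (g 3) (g 1 * g 3 * g 0)
  | path_w : ConifoldRel (g 5) (g 1 * g 5 * g 0)
  | pot_w : ConifoldRel (g 2 * g 3 * g 4) (g 4 * g 3 * g 2)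
  | pot_x : ConifoldRel (g 3 * g 4 * g 5) (g 5 * g 4 * g 3)
  | pot_y : ConifoldRel (g 4 * g 5 * g 2) (g 2 * g 5 * g 4)
  | pot_z : ConifoldRel (g 5 * g 2 * g 3) (g 3 * g 2 * g 5)

/-- The algebra `A₀`, the quotient of the free algebra on `e₁, e₂, x, y, z, w` by the
two-sided ideal generated by the above relations. -/
abbrev ConifoldAlg := RingQuot ConifoldRel

/-- The generator `x` of `A₀`. -/
noncomputable def ax : ConifoldAlg := RingQuot.mkAlgHom ℂ ConifoldRel (g 2)

/-- The generator `y` of `A₀`. -/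
noncomputable def ay : ConifoldAlg := RingQuot.mkAlgHom ℂ ConifoldRel (g 3)

/-- The generator `z` of `A₀`. -/
noncomputable def az : ConifoldAlg := RingQuot.mkAlgHom ℂ ConifoldRel (g 4)

/-- The generator `w` of `A₀`. -/
noncomputable def aw : ConifoldAlg := RingQuot.mkAlgHom ℂ ConifoldRel (g 5)

/-- The open Gromov–Witten generating series `φ(q)` of `ℙ¹_{2,2,2,2}`. -/
noncomputable def phiSeries (q : ℂ) : ℂ :=
  (∑' p : ℕ × ℕ, ((4 * (p.1 : ℂ) + 1)) * q ^ ((4 * p.1 + 1) * (4 * p.2 + 1)))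
    + ∑' p : ℕ × ℕ, ((4 * (p.1 : ℂ) + 3)) * q ^ ((4 * p.1 + 3) * (4 * p.2 + 3))

/-- The open Gromov–Witten generating series `ψ(q)` of `ℙ¹_{2,2,2,2}`. -/
noncomputable def psiSeries (q : ℂ) : ℂ :=
  ∑' p : ℕ × ℕ, (((p.1 : ℂ) + (p.2 : ℂ) + 1)) * q ^ ((4 * p.1 + 1) * (4 * p.2 + 3))

/-- The worldsheet superpotential
`W₀ = φ(q)·((xy)² + (xw)² + (zy)² + (zw)² + (yx)² + (wx)² + (yz)² + (wz)²)
      + ψ(q)·(xyzw + wzyx)`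
of the generalized mirror of `ℙ¹_{2,2,2,2}` with Kähler parameter `q_orb = q⁴`. -/
noncomputable def W0 (q : ℂ) : ConifoldAlg :=
  algebraMap ℂ ConifoldAlg (phiSeries q) *
      (ax * ay * ax * ay + ax * aw * ax * aw + az * ay * az * ay + az * aw * az * aw
        + ay * ax * ay * ax + aw * ax * aw * ax + ay * az * ay * az + aw * az * aw * az)
    + algebraMap ℂ ConifoldAlg (psiSeries q) * (ax * ay * az * aw + aw * az * ay * ax)

/-!
For arrows `a ∈ {x, z}` and `b ∈ {y, w}`, the element `ab + ba` is central in `A₀`. It commutes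
with `e₁` (hence with `e₂ = 1 - e₁`) because `ab ∈ e₁A₀e₁` and `ba ∈ e₂A₀e₂`. For an arrow `c`
parallel to `a`, every term of `(ab + ba)c` and `c(ab + ba)` except `abc` and `cba` vanishes, and
these two agree: the cyclic derivatives of `Φ₀` say precisely that `abc = cba` for parallel arrows
`a, c`. Exchanging the roles of `a` and `b` handles `c` parallel to `b`. As `aa = bb = 0`, the
first part of `W₀` is `∑ (ab + ba)²`, and the second is `(xy + yx)(zw + wz)`, so `W₀` is central
whatever the coefficients `φ(q)`, `ψ(q)` are.
-/

section FreeAlgebra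

variable {R X A : Type*} [CommSemiring R] [Semiring A] [Algebra R A]

theorem mem_center_of_forall_commute_ι {f : FreeAlgebra R X →ₐ[R] A}
    (hf : Function.Surjective f) {z : A} (h : ∀ i, Commute (f (FreeAlgebra.ι R i)) z) :
    z ∈ Subalgebra.center R A := by
  rw [Subalgebra.mem_center_iff]
  intro b
  obtain ⟨a, rfl⟩ := hf b
  induction a using FreeAlgebra.induction with
  | grade0 c => rw [AlgHom.commutes]; exact Algebra.commutes c z
  | grade1 i => exact h i
  | mul a b ha hb => rw [map_mul, mul_assoc, hb, ← mul_assoc, ha, mul_assoc]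
  | add a b ha hb => rw [map_add, add_mul, mul_add, ha, hb]

end FreeAlgebra

section Corner

variable {A : Type*} [Semiring A] {e f a b c : A}

theorem mul_eq_self_of_eq_mul_mul_left (he : IsIdempotentElem e) (ha : a = e * a * f) :
    e * a = a := by
  rw [ha, ← mul_assoc, ← mul_assoc, he.eq]

theorem mul_eq_self_of_eq_mul_mul_right (hf : IsIdempotentElem f) (ha : a = e * a * f) :
    a * f = a := by
  rw [ha, mul_assoc, hf.eq]

theorem mul_eq_zero_of_eq_mul_mul_left (hc : c * e = 0) (ha : a = e * a * f) : c * a = 0 := by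
  rw [ha, ← mul_assoc, ← mul_assoc, hc, zero_mul, zero_mul]

theorem mul_eq_zero_of_eq_mul_mul_right (hc : f * c = 0) (ha : a = e * a * f) : a * c = 0 := by
  rw [ha, mul_assoc, hc, mul_zero]

theorem mul_eq_zero_of_eq_mul_mul {e' f' : A} (hfe : f * e = 0) (ha : a = e' * a * f)
    (hc : c = e * c * f') : a * c = 0 := by
  rw [hc, ← mul_assoc, ← mul_assoc, mul_eq_zero_of_eq_mul_mul_right hfe ha, zero_mul, zero_mul]

theorem commute_mul_add_mul_of_mul_mul_eq (hac : a * c = 0) (hca : c * a = 0)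
    (h : a * b * c = c * b * a) : Commute (a * b + b * a) c := by
  rw [Commute, SemiconjBy, add_mul, mul_add, mul_assoc b, hac, ← mul_assoc c, hca]
  simpa [mul_assoc] using h

theorem commute_mul_add_mul_of_mul_eq_self (hea : e * a = a) (hae : a * e = 0) (hbe : b * e = b)
    (heb : e * b = 0) : Commute (a * b + b * a) e := by
  rw [Commute, SemiconjBy, add_mul, mul_add, mul_assoc, mul_assoc, hbe, hae, ← mul_assoc,
    ← mul_assoc, hea, heb, mul_zero, zero_mul]

theorem mul_add_mul_mul_self_of_mul_self_eq_zero (ha : a * a = 0) (hb : b * b = 0) :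
    (a * b + b * a) * (a * b + b * a) = a * b * a * b + b * a * b * a := by
  simp only [add_mul, mul_add, ← mul_assoc]
  rw [mul_assoc a b b, hb, mul_assoc b a a, ha]
  simp

end Corner

namespace ConifoldAlg

noncomputable def ae1 : ConifoldAlg := RingQuot.mkAlgHom ℂ ConifoldRel (g 0)

noncomputable def ae2 : ConifoldAlg := RingQuot.mkAlgHom ℂ ConifoldRel (g 1)

theorem mkAlgHom_eq_of_rel {a b : FreeAlgebra ℂ (Fin 6)} (h : ConifoldRel a b) :
    RingQuot.mkAlgHom ℂ ConifoldRel a = RingQuot.mkAlgHom ℂ ConifoldRel b :=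
  RingQuot.mkAlgHom_rel ℂ h

theorem ae1_add_ae2 : ae1 + ae2 = 1 := by
  simpa [ae1, ae2] using mkAlgHom_eq_of_rel .unit

theorem isIdempotentElem_ae1 : IsIdempotentElem ae1 := by
  simpa [IsIdempotentElem, ae1] using mkAlgHom_eq_of_rel .idem₁

theorem isIdempotentElem_ae2 : IsIdempotentElem ae2 := by
  simpa [IsIdempotentElem, ae2] using mkAlgHom_eq_of_rel .idem₂

theorem ae1_mul_ae2 : ae1 * ae2 = 0 := by
  simpa [ae1, ae2] using mkAlgHom_eq_of_rel .orth₁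

theorem ae2_mul_ae1 : ae2 * ae1 = 0 := by
  simpa [ae1, ae2] using mkAlgHom_eq_of_rel .orth₂

theorem ax_eq : ax = ae1 * ax * ae2 := by
  simpa [ae1, ae2, ax] using mkAlgHom_eq_of_rel .path_x

theorem az_eq : az = ae1 * az * ae2 := by
  simpa [ae1, ae2, az] using mkAlgHom_eq_of_rel .path_z

theorem ay_eq : ay = ae2 * ay * ae1 := by
  simpa [ae1, ae2, ay] using mkAlgHom_eq_of_rel .path_y

theorem aw_eq : aw = ae2 * aw * ae1 := by
  simpa [ae1, ae2, aw] using mkAlgHom_eq_of_rel .path_w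

theorem ax_ay_az : ax * ay * az = az * ay * ax := by
  simpa [ax, ay, az] using mkAlgHom_eq_of_rel .pot_w

theorem ay_az_aw : ay * az * aw = aw * az * ay := by
  simpa [ay, az, aw] using mkAlgHom_eq_of_rel .pot_x

theorem az_aw_ax : az * aw * ax = ax * aw * az := by
  simpa [az, aw, ax] using mkAlgHom_eq_of_rel .pot_y

theorem aw_ax_ay : aw * ax * ay = ay * ax * aw := by
  simpa [aw, ax, ay] using mkAlgHom_eq_of_rel .pot_z

variable {a b c : ConifoldAlg}

theorem eq_ae1_mul_mul_ae2 (ha : a = ax ∨ a = az) : a = ae1 * a * ae2 := by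
  rcases ha with rfl | rfl
  exacts [ax_eq, az_eq]

theorem eq_ae2_mul_mul_ae1 (hb : b = ay ∨ b = aw) : b = ae2 * b * ae1 := by
  rcases hb with rfl | rfl
  exacts [ay_eq, aw_eq]

theorem mul_mul_eq_rev_of_xz (ha : a = ax ∨ a = az) (hb : b = ay ∨ b = aw) (hc : c = ax ∨ c = az) :
    a * b * c = c * b * a := by
  rcases ha with rfl | rfl <;> rcases hb with rfl | rfl <;> rcases hc with rfl | rfl <;>
    simp only [ax_ay_az, az_aw_ax]

theorem mul_mul_eq_rev_of_yw (ha : a = ay ∨ a = aw) (hb : b = ax ∨ b = az) (hc : c = ay ∨ c = aw) :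
    a * b * c = c * b * a := by
  rcases ha with rfl | rfl <;> rcases hb with rfl | rfl <;> rcases hc with rfl | rfl <;>
    simp only [ay_az_aw, aw_ax_ay]

theorem mul_add_mul_mem_center (ha : a = ax ∨ a = az) (hb : b = ay ∨ b = aw) :
    a * b + b * a ∈ Subalgebra.center ℂ ConifoldAlg := by
  have ha' := eq_ae1_mul_mul_ae2 ha
  have hb' := eq_ae2_mul_mul_ae1 hb
  have commute_ae1 : Commute (a * b + b * a) ae1 :=
    commute_mul_add_mul_of_mul_eq_self (mul_eq_self_of_eq_mul_mul_left isIdempotentElem_ae1 ha')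
      (mul_eq_zero_of_eq_mul_mul_right ae2_mul_ae1 ha')
      (mul_eq_self_of_eq_mul_mul_right isIdempotentElem_ae1 hb')
      (mul_eq_zero_of_eq_mul_mul_left ae1_mul_ae2 hb')
  have commute_ae2 : Commute (a * b + b * a) ae2 := by
    rw [eq_sub_of_add_eq' ae1_add_ae2]
    exact (Commute.one_right _).sub_right commute_ae1
  have commute_xz (c : ConifoldAlg) (hc : c = ax ∨ c = az) : Commute (a * b + b * a) c :=
    commute_mul_add_mul_of_mul_mul_eq
      (mul_eq_zero_of_eq_mul_mul ae2_mul_ae1 ha' (eq_ae1_mul_mul_ae2 hc))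
      (mul_eq_zero_of_eq_mul_mul ae2_mul_ae1 (eq_ae1_mul_mul_ae2 hc) ha')
      (mul_mul_eq_rev_of_xz ha hb hc)
  have commute_yw (c : ConifoldAlg) (hc : c = ay ∨ c = aw) : Commute (a * b + b * a) c := by
    rw [add_comm]
    exact commute_mul_add_mul_of_mul_mul_eq
      (mul_eq_zero_of_eq_mul_mul ae1_mul_ae2 hb' (eq_ae2_mul_mul_ae1 hc))
      (mul_eq_zero_of_eq_mul_mul ae1_mul_ae2 (eq_ae2_mul_mul_ae1 hc) hb')
      (mul_mul_eq_rev_of_yw hb ha hc)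
  refine mem_center_of_forall_commute_ι (RingQuot.mkAlgHom_surjective ℂ ConifoldRel) fun i ↦ ?_
  fin_cases i
  · exact commute_ae1.symm
  · exact commute_ae2.symm
  · exact (commute_xz ax (.inl rfl)).symm
  · exact (commute_yw ay (.inl rfl)).symm
  · exact (commute_xz az (.inr rfl)).symm
  · exact (commute_yw aw (.inr rfl)).symm

theorem ax_ay_add_ay_ax_mul_az_aw_add_aw_az :
    (ax * ay + ay * ax) * (az * aw + aw * az) = ax * ay * az * aw + aw * az * ay * ax := by
  have hyw : ay * aw = 0 := mul_eq_zero_of_eq_mul_mul ae1_mul_ae2 ay_eq aw_eq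
  have hxz : ax * az = 0 := mul_eq_zero_of_eq_mul_mul ae2_mul_ae1 ax_eq az_eq
  have hyxwz : ay * ax * aw * az = aw * az * ay * ax := by
    rw [← aw_ax_ay, mul_assoc aw, mul_assoc aw, ax_ay_az, ← mul_assoc, ← mul_assoc]
  simp only [add_mul, mul_add, ← mul_assoc]
  rw [mul_assoc ax ay aw, hyw, mul_assoc _ ax az, hxz, hyxwz]
  simp

theorem mul_add_mul_mul_self (ha : a = ax ∨ a = az) (hb : b = ay ∨ b = aw) :
    (a * b + b * a) * (a * b + b * a) = a * b * a * b + b * a * b * a :=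
  mul_add_mul_mul_self_of_mul_self_eq_zero
    (mul_eq_zero_of_eq_mul_mul ae2_mul_ae1 (eq_ae1_mul_mul_ae2 ha) (eq_ae1_mul_mul_ae2 ha))
    (mul_eq_zero_of_eq_mul_mul ae1_mul_ae2 (eq_ae2_mul_mul_ae1 hb) (eq_ae2_mul_mul_ae1 hb))

end ConifoldAlg

open ConifoldAlg in
theorem W0_mem_center (q : ℂ) : W0 q ∈ Subalgebra.center ℂ ConifoldAlg := by
  have hx : ax = ax ∨ ax = az := .inl rfl
  have hz : az = ax ∨ az = az := .inr rfl
  have hy : ay = ay ∨ ay = aw := .inl rfl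
  have hw : aw = ay ∨ aw = aw := .inr rfl
  have hxy := mul_add_mul_mem_center hx hy
  have hxw := mul_add_mul_mem_center hx hw
  have hzy := mul_add_mul_mem_center hz hy
  have hzw := mul_add_mul_mem_center hz hw
  rw [W0]
  convert add_mem
    (mul_mem (Subalgebra.algebraMap_mem _ (phiSeries q))
      (add_mem (add_mem (add_mem (mul_mem hxy hxy) (mul_mem hxw hxw)) (mul_mem hzy hzy))
        (mul_mem hzw hzw)))
    (mul_mem (Subalgebra.algebraMap_mem _ (psiSeries q)) (mul_mem hxy hzw)) using 3
  · rw [mul_add_mul_mul_self hx hy, mul_add_mul_mul_self hx hw, mul_add_mul_mul_self hz hy,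
      mul_add_mul_mul_self hz hw]
    abel
  · exact ax_ay_add_ay_ax_mul_az_aw_add_aw_az.symm

theorem W0_central_general (q : ℂ)
    (r : ConifoldAlg) :
    W0 q * r = r * W0 q :=
  (Subalgebra.mem_center_iff.1 (W0_mem_center q) r).symm

/-- for every `q` with `0 < |q| < 1`, the worldsheet superpotential `W₀`
is central in `A₀`. -/
theorem W0_central (q : ℂ) (h0 : 0 < ‖q‖) (h1 : ‖q‖ < 1)
    (r : ConifoldAlg) :
    W0 q * r = r * W0 q :=
  W0_central_general q r
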